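/- Let R be a commutative Noetherian local ring with maximal ideal 𝔪 containing a subring 𝕜, filtered by ideals R = I_0 ⊇ I_1 ⊇ I_2 ⊇ ⋯ with I_j·I_k ⊆ I_{j+k} and such that I_j ⊆ 𝔪^{n_j} for a sequence of integers n_j → ∞. Let M be a finitely generated R-module filtered by M_j := I_j·M. Let (T, G^{(1)}) be a pair that is pointwise of Lie type for the index 1, and let z ∈ M be such that T^{(1)}(z) is an R-submodule of M. Then the following are equivalent: (a) z is finitely order-by-order determined, i.e., there exists N such that {z} + M_{N+1} ⊆ ⋂_{j≥1}(G^{(1)}z + M_j); (b) the quotient module M/T^{(1)}(z) is annihilated by some I_n, i.e., there exists n with I_n·M ⊆ T^{(1)}(z). -/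
import Mathlib


variable {𝕜 R M : Type*} [CommRing 𝕜] [CommRing R] [Algebra 𝕜 R]
  [AddCommGroup M] [Module 𝕜 M] [Module R M] [IsScalarTower 𝕜 R M]

/-- `End^{(i)}_𝕜` for the filtration `M_j = I_j • M`. -/
def EndSI (I : ℕ → Ideal R) (i : ℕ) : Set (Module.End 𝕜 M) :=
  {φ | ∀ j : ℕ, ∀ x ∈ (I j • ⊤ : Submodule R M), φ x ∈ (I (j + i) • ⊤ : Submodule R M)}

/-- `GL^{(i)}` for the filtration `M_j = I_j • M` (for `i ≥ 1`). -/
def GLFilI (I : ℕ → Ideal R) (i : ℕ) : Set (Module.End 𝕜 M)ˣ :=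
  {u | (∀ j : ℕ, ∀ x ∈ (I j • ⊤ : Submodule R M),
      (u : Module.End 𝕜 M) x ∈ (I j • ⊤ : Submodule R M)) ∧
    (∀ j : ℕ, ∀ x ∈ (I j • ⊤ : Submodule R M),
      ((u⁻¹ : (Module.End 𝕜 M)ˣ) : Module.End 𝕜 M) x ∈ (I j • ⊤ : Submodule R M)) ∧
    ((u : Module.End 𝕜 M) - 1) ∈ (EndSI I i : Set (Module.End 𝕜 M)) ∧
    (((u⁻¹ : (Module.End 𝕜 M)ˣ) : Module.End 𝕜 M) - 1) ∈ (EndSI I i : Set (Module.End 𝕜 M))}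

/-- `ord(z) = sup {j : z ∈ I_j • M} ∈ ℕ ∪ {∞}`. -/
noncomputable def ordMI (I : ℕ → Ideal R) (z : M) : ℕ∞ :=
  ⨆ j ∈ {j : ℕ | z ∈ (I j • ⊤ : Submodule R M)}, (j : ℕ∞)

/-- Closure of a subset in the filtration topology. -/
def clFilI (I : ℕ → Ideal R) (X : Set M) : Set M :=
  {m | ∀ j : ℕ, 1 ≤ j → ∃ x ∈ X, m - x ∈ (I j • ⊤ : Submodule R M)}

/-- The pair `(T, G)` is pointwise of Lie type for the index 1
(here `T^{(1)} = T` and `G^{(1)} = G`). -/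
def IsPointwiseLieI (I : ℕ → Ideal R) (T : Submodule 𝕜 (Module.End 𝕜 M))
    (G : Subgroup (Module.End 𝕜 M)ˣ) : Prop :=
  (∀ ξ ∈ T, ∀ z : M, ∃ u : (Module.End 𝕜 M)ˣ, u ∈ G ∧
    (ordMI I (ξ z) < ⊤ →
      ordMI I (((u : Module.End 𝕜 M) - 1 - ξ) z) > ordMI I (ξ z))) ∧
  (∀ u : (Module.End 𝕜 M)ˣ, u ∈ G → ∀ z : M, ∃ ξ ∈ T,
    (ordMI I (((u : Module.End 𝕜 M) - 1) z) < ⊤ →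
      ordMI I (((u : Module.End 𝕜 M) - 1 - ξ) z)
        > ordMI I (((u : Module.End 𝕜 M) - 1) z)))


section Statement14Aux
variable {𝕜 R M : Type*} [CommRing 𝕜] [CommRing R] [Algebra 𝕜 R]
  [AddCommGroup M] [Module 𝕜 M] [Module R M] [IsScalarTower 𝕜 R M]

lemma ordMI_ge (I : ℕ → Ideal R) {x : M} {k : ℕ} (h : x ∈ (I k • ⊤ : Submodule R M)) :
    (k : ℕ∞) ≤ ordMI I x := le_biSup _ h

lemma mem_of_ordMI_gt {I : ℕ → Ideal R} (hIan : Antitone I) {x : M} {k : ℕ}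
    (h : (k : ℕ∞) < ordMI I x) : x ∈ (I (k + 1) • ⊤ : Submodule R M) := by
  obtain ⟨j, hj⟩ := lt_iSup_iff.mp h
  obtain ⟨hjS, hj⟩ := lt_iSup_iff.mp hj
  have hkj : k + 1 ≤ j := by exact_mod_cast hj
  exact Submodule.smul_mono_left (hIan hkj) hjS

lemma ordMI_lt_top {I : ℕ → Ideal R} (hIan : Antitone I) {x : M} {k : ℕ}
    (h : x ∉ (I (k + 1) • ⊤ : Submodule R M)) : ordMI I x < ⊤ := by
  by_contra h'
  push_neg at h'
  exact h (mem_of_ordMI_gt hIan (by simp [top_le_iff.mp h']))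

lemma krull_intersection_aux {R : Type*} {M : Type*} [CommRing R] [AddCommGroup M]
    [Module R M] [IsLocalRing R] [IsNoetherianRing R] [Module.Finite R M]
    {x : M} (h : ∀ t : ℕ, x ∈ ((IsLocalRing.maximalIdeal R) ^ t • ⊤ : Submodule R M)) :
    x = 0 := by
  obtain ⟨m, f, hf⟩ := Module.Finite.exists_fin' R M
  set e := f.quotKerEquivOfSurjective hf with he
  have key : ∀ t : ℕ, e.symm x ∈ ((IsLocalRing.maximalIdeal R) ^ t • ⊤ :
      Submodule R ((Fin m → R) ⧸ LinearMap.ker f)) := by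
    intro t
    have := Submodule.mem_map_of_mem (f := e.symm.toLinearMap) (h t)
    rwa [Submodule.map_smul'', Submodule.map_top, LinearEquiv.range] at this
  have hmem : e.symm x ∈ (⨅ t : ℕ, (IsLocalRing.maximalIdeal R) ^ t • ⊤ :
      Submodule R ((Fin m → R) ⧸ LinearMap.ker f)) := Submodule.mem_iInf _ |>.mpr key
  rw [(IsLocalRing.maximalIdeal R).iInf_pow_smul_eq_bot_of_isLocalRing
    (Ideal.IsMaximal.ne_top (IsLocalRing.maximalIdeal.isMaximal R))] at hmem
  have : e.symm x = 0 := hmem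
  simpa using congrArg e this

end Statement14Aux

/-- over a Noetherian local ring `R` with a filtration `I_j ⊆ 𝔪^{n_j}`,
`n_j → ∞`, and a finitely generated module `M` filtered by `M_j = I_j·M`, for a pair
`(T, G^{(1)})` pointwise of Lie type and `z` with `T^{(1)}(z)` an `R`-submodule:
`z` is finitely order-by-order determined iff `M/T^{(1)}(z)` is annihilated by some `I_n`. -/
theorem statement14 [IsLocalRing R] [IsNoetherianRing R] [Module.Finite R M]
    (I : ℕ → Ideal R) (hI0 : I 0 = ⊤) (hIan : Antitone I)
    (hImul : ∀ j k : ℕ, I j * I k ≤ I (j + k))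
    (n : ℕ → ℕ) (hn : Filter.Tendsto n Filter.atTop Filter.atTop)
    (hIm : ∀ j : ℕ, I j ≤ IsLocalRing.maximalIdeal R ^ (n j))
    (G : Subgroup (Module.End 𝕜 M)ˣ)
    (hG : (G : Set (Module.End 𝕜 M)ˣ) ⊆ GLFilI I 1)
    (T : Submodule 𝕜 (Module.End 𝕜 M))
    (hT : (T : Set (Module.End 𝕜 M)) ⊆ EndSI I 1)
    (hLie : IsPointwiseLieI I T G)
    (z : M) (P : Submodule R M)
    (hP : (P : Set M) = {m : M | ∃ ξ ∈ T, ξ z = m}) :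
    (∃ N : ℕ, ∀ w ∈ (I (N + 1) • ⊤ : Submodule R M),
        z + w ∈ clFilI I {m : M | ∃ u : (Module.End 𝕜 M)ˣ, u ∈ G ∧
          (u : Module.End 𝕜 M) z = m}) ↔
      (∃ n' : ℕ, ∀ x ∈ (I n' • ⊤ : Submodule R M),
        x ∈ {m : M | ∃ ξ ∈ T, ξ z = m}) := by
  set Mj : ℕ → Submodule R M := fun j => (I j • ⊤ : Submodule R M) with hMj
  have hManti : Antitone Mj := fun a b hab => Submodule.smul_mono_left (hIan hab)
  constructor
  · -- (a) → (b): finitely determined implies I_{N+1} • M ⊆ T(z)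
    rintro ⟨N, hN⟩
    -- step lemma
    have step : ∀ k, N + 1 ≤ k → ∀ w ∈ Mj k, ∃ p ∈ P, w - p ∈ Mj (k + 1) := by
      intro k hk w hw
      have hcl := hN w (hManti hk hw)
      obtain ⟨x, ⟨u, huG, hux⟩, hr⟩ := hcl (k + 1) (by omega)
      set r : M := z + w - x with hrdef
      have hrmem : r ∈ Mj (k + 1) := hr
      have hy : (u : Module.End 𝕜 M) z - z = w - r := by
        rw [hrdef, hux]; abel
      have hymem : (u : Module.End 𝕜 M) z - z ∈ Mj k := by
        rw [hy]; exact sub_mem hw (hManti (Nat.le_succ k) hrmem)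
      by_cases hy1 : (u : Module.End 𝕜 M) z - z ∈ Mj (k + 1)
      · refine ⟨0, P.zero_mem, ?_⟩
        have : w = r + ((u : Module.End 𝕜 M) z - z) := by rw [hy]; abel
        rw [sub_zero, this]
        exact add_mem hrmem hy1
      · have hordy : ordMI I (((u : Module.End 𝕜 M) - 1) z) < ⊤ := by
          have : ((u : Module.End 𝕜 M) - 1) z = (u : Module.End 𝕜 M) z - z := by
            simp [LinearMap.sub_apply]
          rw [this]; exact ordMI_lt_top hIan hy1
        obtain ⟨ξ, hξT, hξ⟩ := hLie.2 u huG z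
        have hgt := hξ hordy
        have hordyk : (k : ℕ∞) ≤ ordMI I (((u : Module.End 𝕜 M) - 1) z) := by
          refine ordMI_ge I ?_
          have : ((u : Module.End 𝕜 M) - 1) z = (u : Module.End 𝕜 M) z - z := by
            simp [LinearMap.sub_apply]
          rw [this]; exact hymem
        have hmem2 : ((u : Module.End 𝕜 M) - 1 - ξ) z ∈ Mj (k + 1) :=
          mem_of_ordMI_gt hIan (lt_of_le_of_lt hordyk hgt)
        refine ⟨ξ z, ?_, ?_⟩
        · have : ξ z ∈ (P : Set M) := by rw [hP]; exact ⟨ξ, hξT, rfl⟩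
          exact this
        · have heq : w - ξ z = r + ((u : Module.End 𝕜 M) - 1 - ξ) z := by
            have h2 : ((u : Module.End 𝕜 M) - 1 - ξ) z
                = (u : Module.End 𝕜 M) z - z - ξ z := by
              simp [LinearMap.sub_apply]
            rw [h2, hy]; abel
          rw [heq]
          exact add_mem hrmem hmem2
    -- iterate
    have iter : ∀ d : ℕ, ∀ w ∈ Mj (N + 1), ∃ p ∈ P, w - p ∈ Mj (N + 1 + d) := by
      intro d
      induction d with
      | zero => intro w hw; exact ⟨0, P.zero_mem, by simpa using hw⟩
      | succ d ih =>
        intro w hw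
        obtain ⟨p, hp, hwp⟩ := ih w hw
        obtain ⟨p', hp', hwp'⟩ := step (N + 1 + d) (by omega) _ hwp
        refine ⟨p + p', add_mem hp hp', ?_⟩
        have : w - (p + p') = w - p - p' := by abel
        rw [this]
        exact hwp'
    refine ⟨N + 1, fun x hx => ?_⟩
    have hxP : x ∈ P := by
      have hq : P.mkQ x ∈ (⨅ t : ℕ, (IsLocalRing.maximalIdeal R) ^ t • ⊤ :
          Submodule R (M ⧸ P)) := by
        rw [Submodule.mem_iInf]
        intro t
        obtain ⟨K, hK⟩ := Filter.eventually_atTop.mp (hn.eventually_ge_atTop t)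
        obtain ⟨p, hp, hxp⟩ := iter (K + N + 1) x hx
        have hle : Mj (N + 1 + (K + N + 1)) ≤
            ((IsLocalRing.maximalIdeal R) ^ t • ⊤ : Submodule R M) := by
          refine Submodule.smul_mono_left ?_
          refine le_trans (hIm _) (Ideal.pow_le_pow_right (hK _ (by omega)))
        have hxpm : x - p ∈ ((IsLocalRing.maximalIdeal R) ^ t • ⊤ : Submodule R M) :=
          hle hxp
        have : P.mkQ x = P.mkQ (x - p) := by
          simp [map_sub, (Submodule.Quotient.mk_eq_zero P).mpr hp, Submodule.mkQ_apply]
        rw [this]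
        have := Submodule.mem_map_of_mem (f := P.mkQ) hxpm
        rwa [Submodule.map_smul'', Submodule.map_top, Submodule.range_mkQ] at this
      have hq0 : P.mkQ x = 0 := krull_intersection_aux (Submodule.mem_iInf _ |>.mp hq)
      simpa [Submodule.mkQ_apply, Submodule.Quotient.mk_eq_zero] using hq0
    have : x ∈ (P : Set M) := hxP
    rw [hP] at this
    exact this
  · -- (b) → (a)
    rintro ⟨n', hn'⟩
    refine ⟨n', fun w hw => ?_⟩
    have key : ∀ k : ℕ, ∃ u : (Module.End 𝕜 M)ˣ, u ∈ G ∧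
        z + w - (u : Module.End 𝕜 M) z ∈ Mj (n' + 1 + k) := by
      intro k
      induction k with
      | zero =>
        refine ⟨1, G.one_mem, ?_⟩
        simpa using hw
      | succ k ih =>
        obtain ⟨u, huG, hr⟩ := ih
        set K := n' + 1 + k with hK
        set r : M := z + w - (u : Module.End 𝕜 M) z with hrdef
        have hu := hG huG
        set w' : M := ((u⁻¹ : (Module.End 𝕜 M)ˣ) : Module.End 𝕜 M) r with hw'def
        have hw'K : w' ∈ Mj K := hu.2.1 K r hr
        have hrw' : (u : Module.End 𝕜 M) w' = r := by
          rw [hw'def]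
          have : (u : Module.End 𝕜 M) * ((u⁻¹ : (Module.End 𝕜 M)ˣ) : Module.End 𝕜 M)
              = 1 := u.mul_inv
          calc (u : Module.End 𝕜 M) (((u⁻¹ : (Module.End 𝕜 M)ˣ) : Module.End 𝕜 M) r)
              = ((u : Module.End 𝕜 M) *
                ((u⁻¹ : (Module.End 𝕜 M)ˣ) : Module.End 𝕜 M)) r := rfl
            _ = r := by rw [this]; rfl
        by_cases hw1 : w' ∈ Mj (K + 1)
        · refine ⟨u, huG, ?_⟩
          have : z + w - (u : Module.End 𝕜 M) z = (u : Module.End 𝕜 M) w' := by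
            rw [hrw']
          rw [show n' + 1 + (k + 1) = K + 1 by omega, this]
          exact hu.1 (K + 1) w' hw1
        · obtain ⟨ξ, hξT, hξz⟩ := hn' w' (hManti (by omega) hw'K)
          obtain ⟨v, hvG, hv⟩ := hLie.1 ξ hξT z
          have hord : ordMI I (ξ z) < ⊤ := by
            rw [hξz]; exact ordMI_lt_top hIan hw1
          have hgt := hv hord
          have hordK : (K : ℕ∞) ≤ ordMI I (ξ z) := by
            rw [hξz]; exact ordMI_ge I hw'K
          have hmem2 : ((v : Module.End 𝕜 M) - 1 - ξ) z ∈ Mj (K + 1) :=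
            mem_of_ordMI_gt hIan (lt_of_le_of_lt hordK hgt)
          refine ⟨u * v, G.mul_mem huG hvG, ?_⟩
          have hzw' : z + w' - (v : Module.End 𝕜 M) z
              = -(((v : Module.End 𝕜 M) - 1 - ξ) z) := by
            have h2 : ((v : Module.End 𝕜 M) - 1 - ξ) z
                = (v : Module.End 𝕜 M) z - z - ξ z := by
              simp [LinearMap.sub_apply]
            rw [h2, hξz]; abel
          have hzw'mem : z + w' - (v : Module.End 𝕜 M) z ∈ Mj (K + 1) := by
            rw [hzw']; exact neg_mem hmem2
          have hfinal : z + w - ((u * v : (Module.End 𝕜 M)ˣ) : Module.End 𝕜 M) z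
              = (u : Module.End 𝕜 M) (z + w' - (v : Module.End 𝕜 M) z) := by
            rw [map_sub, map_add, hrw']
            have : ((u * v : (Module.End 𝕜 M)ˣ) : Module.End 𝕜 M) z
                = (u : Module.End 𝕜 M) ((v : Module.End 𝕜 M) z) := rfl
            rw [this, hrdef]; abel
          rw [show n' + 1 + (k + 1) = K + 1 by omega, hfinal]
          exact hu.1 (K + 1) _ hzw'mem
    intro j hj
    obtain ⟨u, huG, hu⟩ := key j
    exact ⟨(u : Module.End 𝕜 M) z, ⟨u, huG, rfl⟩,
      hManti (by omega) hu⟩
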